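/- arXiv:1504.02813 — 4 statements merged into one kernel-verified Lean document; each statement's English description precedes it below -/
import Mathlib

section
/- Leave-one-out consistency lemma: Fix k. Let W₁,…,W_N be n×n matrices with W_k positive definite, let P : ℝⁿ → ℝ be any function, and let y₁,…,y_N ∈ ℝⁿ. Define S⁻ᵏ(g) = -(1/2)·∑_{r≠k} (y_r - g)ᵀ W_r (y_r - g) + P(g) and suppose f⁻ᵏ maximizes S⁻ᵏ over ℝⁿ. Define S*ᵏ(g) = -(1/2)(f⁻ᵏ - g)ᵀ W_k (f⁻ᵏ - g) - (1/2)∑_{r≠k}(y_r - g)ᵀ W_r (y_r - g) + P(g) and suppose f*ᵏ maximizes S*ᵏ over ℝⁿ. Then f*ᵏ = f⁻ᵏ. -/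
open Matrix Finset

/-! Adding the pseudo-observation `f⁻ᵏ` at site `k` subtracts the penalty
`½ (f⁻ᵏ - g)ᵀ W_k (f⁻ᵏ - g)`, which is nonnegative and vanishes at `f⁻ᵏ`. Since `f⁻ᵏ` already
maximizes the unpenalized objective, a maximizer `f*ᵏ` of the penalized one must have zero
penalty, and positive definiteness of `W_k` then forces `f*ᵏ = f⁻ᵏ`. -/

theorem Matrix.PosDef.eq_zero_of_dotProduct_mulVec_nonpos {m : Type*} [Fintype m]
    {M : Matrix m m ℝ} (hM : M.PosDef) {v : m → ℝ} (hv : v ⬝ᵥ (M *ᵥ v) ≤ 0) : v = 0 := by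
  by_contra hne
  exact hv.not_gt (by simpa using hM.dotProduct_mulVec_pos hne)

theorem nonpos_of_forall_le_of_forall_sub_le {α β : Type*} [AddCommGroup β] [LinearOrder β]
    [IsOrderedAddMonoid β] {S Q : α → β} {f g : α} (hf : ∀ x, S x ≤ S f)
    (hg : ∀ x, S x - Q x ≤ S g - Q g) (hQf : Q f = 0) : Q g ≤ 0 := by
  have hSg : S g ≤ S g - Q g := (hf g).trans (by simpa [hQf] using hg f)
  simpa using hSg

theorem stmt_1 {n N : ℕ} (k : Fin N)
    (W : Fin N → Matrix (Fin n) (Fin n) ℝ) (hWk : (W k).PosDef)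
    (P : (Fin n → ℝ) → ℝ) (y : Fin N → Fin n → ℝ)
    (fmk fsk : Fin n → ℝ)
    (hfmk : ∀ g : Fin n → ℝ,
      -(1/2) * ∑ r ∈ univ.erase k, (y r - g) ⬝ᵥ ((W r) *ᵥ (y r - g)) + P g ≤
      -(1/2) * ∑ r ∈ univ.erase k, (y r - fmk) ⬝ᵥ ((W r) *ᵥ (y r - fmk)) + P fmk)
    (hfsk : ∀ g : Fin n → ℝ,
      -(1/2) * ((fmk - g) ⬝ᵥ ((W k) *ᵥ (fmk - g)))
        - (1/2) * ∑ r ∈ univ.erase k, (y r - g) ⬝ᵥ ((W r) *ᵥ (y r - g)) + P g ≤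
      -(1/2) * ((fmk - fsk) ⬝ᵥ ((W k) *ᵥ (fmk - fsk)))
        - (1/2) * ∑ r ∈ univ.erase k, (y r - fsk) ⬝ᵥ ((W r) *ᵥ (y r - fsk)) + P fsk) :
    fsk = fmk := by
  have hpenalty : (1/2) * ((fmk - fsk) ⬝ᵥ ((W k) *ᵥ (fmk - fsk))) ≤ 0 :=
    nonpos_of_forall_le_of_forall_sub_le
      (S := fun g => -(1/2) * ∑ r ∈ univ.erase k, (y r - g) ⬝ᵥ ((W r) *ᵥ (y r - g)) + P g)
      (Q := fun g => (1/2) * ((fmk - g) ⬝ᵥ ((W k) *ᵥ (fmk - g))))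
      hfmk (fun g => by linarith [hfsk g]) (by simp)
  have hfk : fmk - fsk = 0 := hWk.eq_zero_of_dotProduct_mulVec_nonpos (by linarith)
  exact (sub_eq_zero.mp hfk).symm
end

section
/- Cross-validation identity lemma: Assume the setting of Lemma 1 holds for every k, and additionally assume there exist matrices H₁,…,H_N (not depending on y₁,…,y_N) such that for all choices of y₁,…,y_N the maximizer f̂ of S(g) = -(1/2)∑_{k=1}^N (y_k - g)ᵀ W_k (y_k - g) + P(g) equals ∑_{k=1}^N H_k y_k, and for every k the maximizer f⁻ᵏ of S⁻ᵏ exists and the above representation also applies when y_k is replaced by any vector. Then for each k, (I - H_k)(f⁻ᵏ - y_k) = f̂ - y_k. -/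
open Matrix Finset

/-!
Replacing the observation `y_k` by the leave-one-out fit `f⁻ᵏ` does not move the maximizer: the
`k`-th penalty `(f⁻ᵏ - g)ᵀ W_k (f⁻ᵏ - g)` is nonnegative and vanishes at `g = f⁻ᵏ`. So `f⁻ᵏ`
maximizes the full objective for the data `(y₁, …, f⁻ᵏ, …, y_N)`, and the representation gives
`f⁻ᵏ = H_k f⁻ᵏ + ∑_{r ≠ k} H_r y_r`. Subtracting this from `f̂ = H_k y_k + ∑_{r ≠ k} H_r y_r`
leaves `(I - H_k)(f⁻ᵏ - y_k) = f̂ - y_k`.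
-/

theorem Finset.sum_apply_update_eq_add_sum_erase {ι α M : Type*} [Fintype ι] [DecidableEq ι]
    [AddCommMonoid M] (φ : ι → α → M) (y : ι → α) (k : ι) (v : α) :
    ∑ r, φ r (Function.update y k v r) = φ k v + ∑ r ∈ univ.erase k, φ r (y r) := by
  rw [← add_sum_erase _ _ (mem_univ k), Function.update_self]
  congr 1
  exact sum_congr rfl fun r hr => by rw [Function.update_of_ne (ne_of_mem_erase hr)]

theorem Matrix.one_sub_mulVec_sub_of_sub_mulVec_eq {m R : Type*} [Fintype m] [DecidableEq m]
    [CommRing R] (A : Matrix m m R) {x y z : m → R} (h : x - A *ᵥ x = z - A *ᵥ y) :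
    (1 - A) *ᵥ (x - y) = z - y := by
  rw [sub_mulVec, one_mulVec, mulVec_sub, sub_sub_sub_comm, h, sub_sub_sub_cancel_right]

section LeaveOneOut

variable {ι m : Type*} [Fintype ι] [DecidableEq ι] [Fintype m]

theorem forall_le_update_of_forall_le_erase (W : ι → Matrix m m ℝ) (P : (m → ℝ) → ℝ)
    (y : ι → m → ℝ) {k : ι} (hWk : (W k).PosSemidef) {f : m → ℝ}
    (hf : ∀ g : m → ℝ,
      -(1/2) * ∑ r ∈ univ.erase k, (y r - g) ⬝ᵥ (W r *ᵥ (y r - g)) + P g ≤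
      -(1/2) * ∑ r ∈ univ.erase k, (y r - f) ⬝ᵥ (W r *ᵥ (y r - f)) + P f)
    (g : m → ℝ) :
    -(1/2) * ∑ r, (Function.update y k f r - g) ⬝ᵥ (W r *ᵥ (Function.update y k f r - g)) + P g ≤
    -(1/2) * ∑ r, (Function.update y k f r - f) ⬝ᵥ (W r *ᵥ (Function.update y k f r - f)) +
      P f := by
  have hsplit (g' : m → ℝ) :=
    sum_apply_update_eq_add_sum_erase (fun r v => (v - g') ⬝ᵥ (W r *ᵥ (v - g'))) y k f
  rw [hsplit g, hsplit f, sub_self, mulVec_zero, dotProduct_zero, zero_add]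
  have hnonneg : 0 ≤ (f - g) ⬝ᵥ (W k *ᵥ (f - g)) := by
    simpa using hWk.dotProduct_mulVec_nonneg (f - g)
  linarith [hf g]

end LeaveOneOut

theorem stmt_2 {n N : ℕ} (k : Fin N)
    (W : Fin N → Matrix (Fin n) (Fin n) ℝ) (hW : ∀ r, (W r).PosDef)
    (P : (Fin n → ℝ) → ℝ) (y : Fin N → Fin n → ℝ)
    (H : Fin N → Matrix (Fin n) (Fin n) ℝ)
    -- representation hypothesis: for any data u₁,…,u_N, any maximizer of the
    -- full objective equals ∑ r, H_r u_r
    (hrep : ∀ (u : Fin N → Fin n → ℝ) (f : Fin n → ℝ),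
      (∀ g : Fin n → ℝ,
        -(1/2) * ∑ r, (u r - g) ⬝ᵥ ((W r) *ᵥ (u r - g)) + P g ≤
        -(1/2) * ∑ r, (u r - f) ⬝ᵥ ((W r) *ᵥ (u r - f)) + P f) →
      f = ∑ r, (H r) *ᵥ (u r))
    (fmk fhat : Fin n → ℝ)
    -- f⁻ᵏ maximizes the leave-one-out objective
    (hfmk : ∀ g : Fin n → ℝ,
      -(1/2) * ∑ r ∈ univ.erase k, (y r - g) ⬝ᵥ ((W r) *ᵥ (y r - g)) + P g ≤
      -(1/2) * ∑ r ∈ univ.erase k, (y r - fmk) ⬝ᵥ ((W r) *ᵥ (y r - fmk)) + P fmk)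
    -- f̂ maximizes the full objective
    (hfhat : ∀ g : Fin n → ℝ,
      -(1/2) * ∑ r, (y r - g) ⬝ᵥ ((W r) *ᵥ (y r - g)) + P g ≤
      -(1/2) * ∑ r, (y r - fhat) ⬝ᵥ ((W r) *ᵥ (y r - fhat)) + P fhat) :
    (1 - H k) *ᵥ (fmk - y k) = fhat - y k := by
  have hfmk_rep := hrep _ fmk (forall_le_update_of_forall_le_erase W P y (hW k).posSemidef hfmk)
  have hfhat_rep := hrep y fhat hfhat
  rw [sum_apply_update_eq_add_sum_erase (fun r v => H r *ᵥ v)] at hfmk_rep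
  rw [← add_sum_erase _ _ (mem_univ k)] at hfhat_rep
  apply one_sub_mulVec_sub_of_sub_mulVec_eq
  rw [hfhat_rep, add_sub_cancel_left, sub_eq_iff_eq_add']
  exact hfmk_rep
end

section
/- Theorem 1 (CV formula): Under the hypotheses of Lemma 2, and assuming additionally that I - H_k is invertible for each k, the cross-validation criterion CV = ∑_{k=1}^N (y_k - f⁻ᵏ)ᵀ W_k (y_k - f⁻ᵏ) equals ∑_{k=1}^N [(I - H_k)⁻¹(f̂ - y_k)]ᵀ W_k [(I - H_k)⁻¹(f̂ - y_k)]. -/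
open Matrix Finset

/-!
Replacing the left-out observation `y_k` by the leave-one-out fit `f⁻ᵏ` costs nothing at
`f⁻ᵏ` and can only lower the objective elsewhere, so `f⁻ᵏ` maximizes the full objective for
the modified data. Since the full maximizer is linear in the data, `f⁻ᵏ = f̂ + H_k (f⁻ᵏ - y_k)`,
i.e. `(I - H_k)(f⁻ᵏ - y_k) = f̂ - y_k`, and inverting `I - H_k` gives each term of the sum.
-/

section PenalizedFit

variable {ι m : Type*} [Fintype m]

noncomputable def penalizedFit (W : ι → Matrix m m ℝ) (P : (m → ℝ) → ℝ) (s : Finset ι)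
    (u : ι → m → ℝ) (g : m → ℝ) : ℝ :=
  -(1/2) * ∑ r ∈ s, (u r - g) ⬝ᵥ (W r *ᵥ (u r - g)) + P g

variable [Fintype ι] [DecidableEq ι] (W : ι → Matrix m m ℝ) (P : (m → ℝ) → ℝ)

theorem penalizedFit_update (u : ι → m → ℝ) (k : ι) (v g : m → ℝ) :
    penalizedFit W P univ (Function.update u k v) g =
      penalizedFit W P (univ.erase k) u g - (1/2) * ((v - g) ⬝ᵥ (W k *ᵥ (v - g))) := by
  have herase : ∑ r ∈ univ.erase k, (Function.update u k v r - g) ⬝ᵥ (W r *ᵥ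
      (Function.update u k v r - g)) = ∑ r ∈ univ.erase k, (u r - g) ⬝ᵥ (W r *ᵥ (u r - g)) :=
    sum_congr rfl fun r hr => by rw [Function.update_of_ne (ne_of_mem_erase hr)]
  unfold penalizedFit
  rw [← sum_erase_add _ _ (mem_univ k), herase, Function.update_self]
  ring

theorem penalizedFit_update_le_of_le_erase {u : ι → m → ℝ} {k : ι} {v : m → ℝ}
    (hW : (W k).PosSemidef) (hv : ∀ g, penalizedFit W P (univ.erase k) u g ≤
      penalizedFit W P (univ.erase k) u v) (g : m → ℝ) :
    penalizedFit W P univ (Function.update u k v) g ≤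
      penalizedFit W P univ (Function.update u k v) v := by
  have hq : 0 ≤ (v - g) ⬝ᵥ (W k *ᵥ (v - g)) := by
    simpa using hW.dotProduct_mulVec_nonneg (v - g)
  rw [penalizedFit_update, penalizedFit_update, sub_self, zero_dotProduct, mul_zero, sub_zero]
  linarith [hv g]

end PenalizedFit

theorem sum_mulVec_update {ι m R : Type*} [Fintype ι] [DecidableEq ι] [Fintype m] [Ring R]
    (H : ι → Matrix m m R) (u : ι → m → R) (k : ι) (v : m → R) :
    ∑ r, H r *ᵥ Function.update u k v r = ∑ r, H r *ᵥ u r + H k *ᵥ (v - u k) := by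
  rw [← add_sum_erase _ _ (mem_univ k), ← add_sum_erase _ _ (mem_univ k),
    Function.update_self, mulVec_sub,
    sum_congr rfl fun r hr => by rw [Function.update_of_ne (ne_of_mem_erase hr)]]
  abel

theorem sub_eq_inv_one_sub_mulVec {m R : Type*} [Fintype m] [DecidableEq m] [CommRing R]
    {A : Matrix m m R} (hA : IsUnit (1 - A)) {f fhat y : m → R}
    (h : f = fhat + A *ᵥ (f - y)) : f - y = (1 - A)⁻¹ *ᵥ (fhat - y) := by
  have : (1 - A) *ᵥ (f - y) = fhat - y := by
    rw [sub_mulVec, one_mulVec]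
    nth_rewrite 1 [h]
    abel
  rw [← this, mulVec_mulVec, nonsing_inv_mul _ ((isUnit_iff_isUnit_det _).mp hA), one_mulVec]

theorem stmt_3 {n N : ℕ}
    (W : Fin N → Matrix (Fin n) (Fin n) ℝ) (hW : ∀ r, (W r).PosDef)
    (P : (Fin n → ℝ) → ℝ) (y : Fin N → Fin n → ℝ)
    (H : Fin N → Matrix (Fin n) (Fin n) ℝ)
    (hHinv : ∀ k, IsUnit (1 - H k))
    -- representation hypothesis: for any data u₁,…,u_N, any maximizer of the
    -- full objective equals ∑ r, H_r u_r
    (hrep : ∀ (u : Fin N → Fin n → ℝ) (f : Fin n → ℝ),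
      (∀ g : Fin n → ℝ,
        -(1/2) * ∑ r, (u r - g) ⬝ᵥ ((W r) *ᵥ (u r - g)) + P g ≤
        -(1/2) * ∑ r, (u r - f) ⬝ᵥ ((W r) *ᵥ (u r - f)) + P f) →
      f = ∑ r, (H r) *ᵥ (u r))
    (fm : Fin N → Fin n → ℝ) (fhat : Fin n → ℝ)
    -- for each k, fm k maximizes the leave-one-out objective
    (hfm : ∀ (k : Fin N) (g : Fin n → ℝ),
      -(1/2) * ∑ r ∈ univ.erase k, (y r - g) ⬝ᵥ ((W r) *ᵥ (y r - g)) + P g ≤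
      -(1/2) * ∑ r ∈ univ.erase k, (y r - fm k) ⬝ᵥ ((W r) *ᵥ (y r - fm k)) + P (fm k))
    -- fhat maximizes the full objective
    (hfhat : ∀ g : Fin n → ℝ,
      -(1/2) * ∑ r, (y r - g) ⬝ᵥ ((W r) *ᵥ (y r - g)) + P g ≤
      -(1/2) * ∑ r, (y r - fhat) ⬝ᵥ ((W r) *ᵥ (y r - fhat)) + P fhat) :
    ∑ k, (y k - fm k) ⬝ᵥ ((W k) *ᵥ (y k - fm k)) =
    ∑ k, ((1 - H k)⁻¹ *ᵥ (fhat - y k)) ⬝ᵥ ((W k) *ᵥ ((1 - H k)⁻¹ *ᵥ (fhat - y k))) := by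
  have hfhat_eq : fhat = ∑ r, H r *ᵥ y r := hrep y fhat hfhat
  refine sum_congr rfl fun k _ => ?_
  have hloo : fm k = fhat + H k *ᵥ (fm k - y k) := by
    rw [hfhat_eq, ← sum_mulVec_update]
    exact hrep _ _ (penalizedFit_update_le_of_le_erase W P (hW k).posSemidef (hfm k))
  rw [← neg_sub (fm k), ← sub_eq_inv_one_sub_mulVec (hHinv k) hloo, mulVec_neg, dotProduct_neg,
    neg_dotProduct, neg_neg]
end

section
/- The determinant of the non-homogeneous random intercept covariance V = σ²(I + d₁·11ᵀ + d₂·1_z 1_zᵀ), where 1_z ∈ {0,1}ⁿ has exactly m entries equal to 1, equals σ^{2n}·[(1 + n d₁)(1 + m d₂) - m² d₁ d₂] (equivalently σ^{2n}(1 + n d₁ + m d₂ + (n - m) m d₁ d₂)). -/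
open Matrix Finset

theorem stmt_6 {n m : ℕ} (hm : m ≤ n) (σ2 d1 d2 : ℝ)
    (z : Fin n → ℝ) (hz01 : ∀ i, z i = 0 ∨ z i = 1)
    (hzsum : ∑ i, z i = m) :
    (σ2 • ((1 : Matrix (Fin n) (Fin n) ℝ) +
      d1 • vecMulVec (fun _ => (1 : ℝ)) (fun _ => (1 : ℝ)) +
      d2 • vecMulVec z z)).det =
    σ2 ^ n * ((1 + n * d1) * (1 + m * d2) - m ^ 2 * d1 * d2) := by
  have hzz : ∀ i, z i * z i = z i := by
    intro i; rcases hz01 i with h | h <;> simp [h]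
  set U : Matrix (Fin n) (Fin 2) ℝ :=
    Matrix.of (fun i j => if j = 0 then d1 else d2 * z i) with hU
  set V : Matrix (Fin 2) (Fin n) ℝ :=
    Matrix.of (fun j i => if j = 0 then (1 : ℝ) else z i) with hV
  have hM : (1 : Matrix (Fin n) (Fin n) ℝ) +
      d1 • vecMulVec (fun _ => (1 : ℝ)) (fun _ => (1 : ℝ)) +
      d2 • vecMulVec z z = 1 + U * V := by
    ext i j
    simp [hU, hV, Matrix.mul_apply, Fin.sum_univ_two, vecMulVec_apply,
      Matrix.add_apply, mul_comm, mul_assoc, mul_left_comm]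
    ring
  rw [hM, Matrix.det_smul, Matrix.det_one_add_mul_comm, Fintype.card_fin]
  congr 1
  have hsq : ∑ i, z i * z i = (m : ℝ) := by
    simp only [hzz]; exact hzsum
  rw [Matrix.det_fin_two]
  simp only [Matrix.add_apply, Matrix.mul_apply, Matrix.one_apply, hU, hV, Matrix.of_apply]
  simp only [if_pos rfl, if_neg (by decide : (1 : Fin 2) ≠ 0)]
  simp [Finset.mul_sum, mul_comm, mul_assoc, mul_left_comm, hzsum, hsq,
    ← Finset.sum_mul, Finset.sum_const, Finset.card_univ]
  simp only [hzz, ← Finset.mul_sum, ← Finset.sum_mul, hzsum]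
  ring
end
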